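/- arXiv:1804.02307 — 4 statements merged into one kernel-verified Lean document; each statement's English description precedes it below -/
import Mathlib

section
/- Suppose (∇ψ)λ = w pointwise, where ψ is a smooth map with invertible Jacobian. Then ∂_t λ + (Dλ)v + λ div(v) = (∇ψ)⁻¹[ ∂_t w + (Dw)v + (∇v)w + w div(v) ], where ∇ψ = (Dψ)ᵀ and ∂_t ψ + (Dψ)v = 0. -/
open ContinuousLinearMap

noncomputable abbrev EE (n : ℕ) := EuclideanSpace ℝ (Fin n)

/-- the joint function -/
abbrev Jt {n : ℕ} (f : ℝ → EE n → EE n) : ℝ × EE n → EE n := fun p => f p.1 p.2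

/-- adjoint as a continuous linear map on CLMs. -/
noncomputable def adjC (n : ℕ) : (EE n →L[ℝ] EE n) →L[ℝ] (EE n →L[ℝ] EE n) :=
  LinearMap.toContinuousLinearMap
  { toFun := fun A => adjoint A
    map_add' := fun A B => by simp [map_add]
    map_smul' := fun c A => by simp }

@[simp] theorem adjC_apply {n : ℕ} (A : EE n →L[ℝ] EE n) : adjC n A = adjoint A := rfl

theorem isUnit_adjoint {n : ℕ} {A : EE n →L[ℝ] EE n} (h : IsUnit A) :
    IsUnit (adjoint A) := by
  obtain ⟨u, rfl⟩ := h
  refine ⟨⟨adjoint (u : EE n →L[ℝ] EE n), adjoint ((u⁻¹ : (EE n →L[ℝ] EE n)ˣ) : EE n →L[ℝ] EE n), ?_, ?_⟩, rfl⟩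
  · show (adjoint (u : EE n →L[ℝ] EE n)).comp (adjoint ((u⁻¹ : (EE n →L[ℝ] EE n)ˣ) : EE n →L[ℝ] EE n)) = 1
    rw [← adjoint_comp]
    have : ((u⁻¹ : (EE n →L[ℝ] EE n)ˣ) : EE n →L[ℝ] EE n) ∘L (u : EE n →L[ℝ] EE n) = 1 := u.inv_mul
    rw [this]
    simpa [ContinuousLinearMap.one_def] using adjoint_id (𝕜 := ℝ) (E := EE n)
  · show (adjoint ((u⁻¹ : (EE n →L[ℝ] EE n)ˣ) : EE n →L[ℝ] EE n)).comp (adjoint (u : EE n →L[ℝ] EE n)) = 1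
    rw [← adjoint_comp]
    have : ((u : EE n →L[ℝ] EE n)) ∘L ((u⁻¹ : (EE n →L[ℝ] EE n)ˣ) : EE n →L[ℝ] EE n) = 1 := u.mul_inv
    rw [this]
    simpa [ContinuousLinearMap.one_def] using adjoint_id (𝕜 := ℝ) (E := EE n)

theorem inverse_apply_self {n : ℕ} {A : EE n →L[ℝ] EE n} (h : IsUnit A) (y : EE n) :
    A.inverse (A y) = y := by
  rw [← ContinuousLinearMap.ringInverse_eq_inverse]
  have : (Ring.inverse A * A) y = y := by rw [Ring.inverse_mul_cancel _ h]; rfl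
  simpa [ContinuousLinearMap.mul_apply] using this

/-- spatial slice derivative. -/
theorem fderiv_slice {n : ℕ} {f : ℝ → EE n → EE n}
    (hf : ContDiff ℝ (⊤ : ℕ∞) (Jt f)) (t : ℝ) (x : EE n) :
    fderiv ℝ (f t) x = (fderiv ℝ (Jt f) (t, x)).comp (inr ℝ ℝ (EE n)) := by
  have h1 : HasFDerivAt (Jt f) (fderiv ℝ (Jt f) (t, x)) (t, x) :=
    (hf.differentiable (by simp) (t, x)).hasFDerivAt
  have h2 := hasFDerivAt_prodMk_right (𝕜 := ℝ) t x
  exact (h1.comp x h2).fderiv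

/-- time slice derivative. -/
theorem deriv_slice {n : ℕ} {f : ℝ → EE n → EE n}
    (hf : ContDiff ℝ (⊤ : ℕ∞) (Jt f)) (t : ℝ) (x : EE n) :
    deriv (fun s => f s x) t = (fderiv ℝ (Jt f) (t, x)) (1, 0) := by
  have h1 : HasFDerivAt (Jt f) (fderiv ℝ (Jt f) (t, x)) (t, x) :=
    (hf.differentiable (by simp) (t, x)).hasFDerivAt
  have h2 : HasDerivAt (fun s : ℝ => (s, x)) ((1 : ℝ), (0 : EE n)) t :=
    HasDerivAt.prodMk (hasDerivAt_id t) (hasDerivAt_const t x)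
  exact (h1.comp_hasDerivAt t h2).deriv

theorem slice_sum {n : ℕ} {f : ℝ → EE n → EE n}
    (hf : ContDiff ℝ (⊤ : ℕ∞) (Jt f)) (t : ℝ) (x : EE n) (u : EE n) :
    deriv (fun s => f s x) t + fderiv ℝ (f t) x u = (fderiv ℝ (Jt f) (t, x)) (1, u) := by
  rw [deriv_slice hf t x, fderiv_slice hf t x]
  simp only [ContinuousLinearMap.comp_apply, inr_apply]
  rw [← map_add]
  norm_num

/-- joint transport: `DΨ (1, v) = 0` everywhere. -/
theorem htrJ {n : ℕ} {ψ v : ℝ → EE n → EE n}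
    (hψ : ContDiff ℝ (⊤ : ℕ∞) (Jt ψ))
    (htransport : ∀ t x, deriv (fun s => ψ s x) t + fderiv ℝ (ψ t) x (v t x) = 0) :
    ∀ q : ℝ × EE n, fderiv ℝ (Jt ψ) q (1, Jt v q) = 0 := by
  intro q
  have h := htransport q.1 q.2
  rw [slice_sum hψ q.1 q.2 (v q.1 q.2)] at h
  exact h

/-- key: `(D²Ψ (1,v)) ∘ inr = -(Dψ) ∘ (Dv)`. -/
theorem hB_lem {n : ℕ} {ψ v : ℝ → EE n → EE n}
    (hψ : ContDiff ℝ (⊤ : ℕ∞) (Jt ψ)) (hv : ContDiff ℝ (⊤ : ℕ∞) (Jt v))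
    (htransport : ∀ t x, deriv (fun s => ψ s x) t + fderiv ℝ (ψ t) x (v t x) = 0)
    (t : ℝ) (x : EE n) :
    (fderiv ℝ (fderiv ℝ (Jt ψ)) (t, x) (1, v t x)).comp (inr ℝ ℝ (EE n))
      = -((fderiv ℝ (ψ t) x).comp (fderiv ℝ (v t) x)) := by
  have hG : ContDiff ℝ (⊤ : ℕ∞) (fderiv ℝ (Jt ψ)) := hψ.fderiv_right (by simp)
  have hG'' : HasFDerivAt (fderiv ℝ (Jt ψ)) (fderiv ℝ (fderiv ℝ (Jt ψ)) (t, x)) (t, x) :=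
    (hG.differentiable (by simp) (t, x)).hasFDerivAt
  have hsymm : ∀ a b, fderiv ℝ (fderiv ℝ (Jt ψ)) (t, x) a b
      = fderiv ℝ (fderiv ℝ (Jt ψ)) (t, x) b a :=
    second_derivative_symmetric (f := Jt ψ)
      (fun q => ((hψ.differentiable (by simp)) q).hasFDerivAt) hG''
  have hprod : HasFDerivAt (fun q : ℝ × EE n => ((1 : ℝ), Jt v q))
      ((0 : (ℝ × EE n) →L[ℝ] ℝ).prod (fderiv ℝ (Jt v) (t, x))) (t, x) :=
    HasFDerivAt.prodMk (hasFDerivAt_const (1 : ℝ) (t, x)) ((hv.differentiable (by simp) (t, x)).hasFDerivAt)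
  have hHd : HasFDerivAt (fun q : ℝ × EE n => fderiv ℝ (Jt ψ) q ((1 : ℝ), Jt v q))
      ((fderiv ℝ (Jt ψ) (t, x)).comp ((0 : (ℝ × EE n) →L[ℝ] ℝ).prod (fderiv ℝ (Jt v) (t, x)))
        + (fderiv ℝ (fderiv ℝ (Jt ψ)) (t, x)).flip ((1 : ℝ), Jt v (t, x))) (t, x) :=
    hG''.clm_apply hprod
  have hzero : (fun q : ℝ × EE n => fderiv ℝ (Jt ψ) q ((1 : ℝ), Jt v q)) = fun _ => (0 : EE n) :=
    funext (htrJ hψ htransport)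
  rw [hzero] at hHd
  have heq := hHd.unique (hasFDerivAt_const (0 : EE n) (t, x))
  have key1 : ∀ r : ℝ × EE n, fderiv ℝ (fderiv ℝ (Jt ψ)) (t, x) r ((1 : ℝ), v t x)
      = -(fderiv ℝ (Jt ψ) (t, x)) (0, fderiv ℝ (Jt v) (t, x) r) := by
    intro r
    have h := ContinuousLinearMap.ext_iff.1 heq r
    simp only [ContinuousLinearMap.add_apply, ContinuousLinearMap.comp_apply,
      ContinuousLinearMap.prod_apply, ContinuousLinearMap.zero_apply,
      ContinuousLinearMap.flip_apply] at h
    exact eq_neg_of_add_eq_zero_right h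
  apply ContinuousLinearMap.ext
  intro h
  simp only [ContinuousLinearMap.comp_apply, ContinuousLinearMap.inr_apply,
    ContinuousLinearMap.neg_apply]
  rw [hsymm ((1 : ℝ), v t x) ((0 : ℝ), h), key1 ((0 : ℝ), h)]
  rw [fderiv_slice hψ t x, fderiv_slice hv t x]
  simp only [ContinuousLinearMap.comp_apply, ContinuousLinearMap.inr_apply]

/-- differentiating the adjoint relation along `(1, v)`. -/
theorem hrel_deriv {n : ℕ} {ψ v lam w : ℝ → EE n → EE n}
    (hψ : ContDiff ℝ (⊤ : ℕ∞) (Jt ψ)) (hv : ContDiff ℝ (⊤ : ℕ∞) (Jt v))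
    (hlam : ContDiff ℝ (⊤ : ℕ∞) (Jt lam)) (hw : ContDiff ℝ (⊤ : ℕ∞) (Jt w))
    (htransport : ∀ t x, deriv (fun s => ψ s x) t + fderiv ℝ (ψ t) x (v t x) = 0)
    (hrel : ∀ t x, adjoint (fderiv ℝ (ψ t) x) (lam t x) = w t x)
    (t : ℝ) (x : EE n) :
    fderiv ℝ (Jt w) (t, x) (1, v t x)
      = adjoint (fderiv ℝ (ψ t) x) (fderiv ℝ (Jt lam) (t, x) (1, v t x))
        - adjoint (fderiv ℝ (v t) x) (w t x) := by
  have hG : ContDiff ℝ (⊤ : ℕ∞) (fderiv ℝ (Jt ψ)) := hψ.fderiv_right (by simp)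
  have hG'' : HasFDerivAt (fderiv ℝ (Jt ψ)) (fderiv ℝ (fderiv ℝ (Jt ψ)) (t, x)) (t, x) :=
    (hG.differentiable (by simp) (t, x)).hasFDerivAt
  set Rc : ((ℝ × EE n) →L[ℝ] EE n) →L[ℝ] (EE n →L[ℝ] EE n) :=
    (ContinuousLinearMap.compL ℝ (EE n) (ℝ × EE n) (EE n)).flip (inr ℝ ℝ (EE n)) with hRcd
  have hRc_apply : ∀ B : (ℝ × EE n) →L[ℝ] EE n, Rc B = B.comp (inr ℝ ℝ (EE n)) := fun B => rfl
  have hDψdiff : HasFDerivAt (fun q : ℝ × EE n => Rc (fderiv ℝ (Jt ψ) q))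
      (Rc.comp (fderiv ℝ (fderiv ℝ (Jt ψ)) (t, x))) (t, x) :=
    Rc.hasFDerivAt.comp (t, x) hG''
  have hΛdiff : HasFDerivAt (Jt lam) (fderiv ℝ (Jt lam) (t, x)) (t, x) :=
    (hlam.differentiable (by simp) (t, x)).hasFDerivAt
  have hK : HasFDerivAt (fun q : ℝ × EE n => adjC n (Rc (fderiv ℝ (Jt ψ) q)) (Jt lam q))
      ((adjC n (Rc (fderiv ℝ (Jt ψ) (t, x)))).comp (fderiv ℝ (Jt lam) (t, x))
        + ((adjC n).comp (Rc.comp (fderiv ℝ (fderiv ℝ (Jt ψ)) (t, x)))).flip (Jt lam (t, x)))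
      (t, x) :=
    ((adjC n).hasFDerivAt.comp (t, x) hDψdiff).clm_apply hΛdiff
  have hDψ_eq : ∀ q : ℝ × EE n,
      fderiv ℝ (ψ q.1) q.2 = (fderiv ℝ (Jt ψ) q).comp (inr ℝ ℝ (EE n)) :=
    fun q => fderiv_slice hψ q.1 q.2
  have hKW : (fun q : ℝ × EE n => adjC n (Rc (fderiv ℝ (Jt ψ) q)) (Jt lam q)) = Jt w := by
    funext q
    rw [adjC_apply, hRc_apply, ← hDψ_eq q]
    exact hrel q.1 q.2
  have hWdiff : HasFDerivAt (Jt w) (fderiv ℝ (Jt w) (t, x)) (t, x) :=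
    (hw.differentiable (by simp) (t, x)).hasFDerivAt
  rw [hKW] at hK
  have heq2 := hK.unique hWdiff
  have h := ContinuousLinearMap.ext_iff.1 heq2.symm ((1 : ℝ), v t x)
  simp only [ContinuousLinearMap.add_apply, ContinuousLinearMap.comp_apply,
    ContinuousLinearMap.flip_apply] at h
  rw [h]
  have hRcB : Rc (fderiv ℝ (fderiv ℝ (Jt ψ)) (t, x) ((1 : ℝ), v t x))
      = -((fderiv ℝ (ψ t) x).comp (fderiv ℝ (v t) x)) := by
    rw [hRc_apply, hB_lem hψ hv htransport t x]
  rw [hRcB]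
  have h2 : adjC n (-((fderiv ℝ (ψ t) x).comp (fderiv ℝ (v t) x))) (Jt lam (t, x))
      = -(adjoint (fderiv ℝ (v t) x) (w t x)) := by
    rw [adjC_apply, map_neg, ContinuousLinearMap.adjoint_comp]
    simp only [ContinuousLinearMap.neg_apply, ContinuousLinearMap.comp_apply]
    have : adjoint (fderiv ℝ (ψ t) x) (Jt lam (t, x)) = w t x := hrel t x
    rw [this]
  rw [h2]
  have h3 : adjC n (Rc (fderiv ℝ (Jt ψ) (t, x)))
      = adjoint (fderiv ℝ (ψ t) x) := by
    rw [adjC_apply, hRc_apply, ← hDψ_eq (t, x)]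
  rw [h3]
  abel

/-- If `(∇ψ)λ = w` with `∇ψ = (Dψ)ᵀ` invertible and `∂ₜψ + (Dψ)v = 0`, then
`∂ₜλ + (Dλ)v + λ div v = (∇ψ)⁻¹[∂ₜw + (Dw)v + (∇v)w + w div v]`. -/
theorem lambda_evolution {n : ℕ}
    (ψ v lam w : ℝ → EuclideanSpace ℝ (Fin n) → EuclideanSpace ℝ (Fin n))
    (hψ : ContDiff ℝ (⊤ : ℕ∞) (fun p : ℝ × EuclideanSpace ℝ (Fin n) => ψ p.1 p.2))
    (hv : ContDiff ℝ (⊤ : ℕ∞) (fun p : ℝ × EuclideanSpace ℝ (Fin n) => v p.1 p.2))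
    (hlam : ContDiff ℝ (⊤ : ℕ∞) (fun p : ℝ × EuclideanSpace ℝ (Fin n) => lam p.1 p.2))
    (hw : ContDiff ℝ (⊤ : ℕ∞) (fun p : ℝ × EuclideanSpace ℝ (Fin n) => w p.1 p.2))
    (hinvertible : ∀ t x, IsUnit (fderiv ℝ (ψ t) x))
    (htransport : ∀ t x,
      deriv (fun s => ψ s x) t + fderiv ℝ (ψ t) x (v t x) = 0)
    (hrel : ∀ t x, adjoint (fderiv ℝ (ψ t) x) (lam t x) = w t x) :
    ∀ t x,
      deriv (fun s => lam s x) t + fderiv ℝ (lam t) x (v t x)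
        + (LinearMap.trace ℝ (EuclideanSpace ℝ (Fin n))
            (fderiv ℝ (v t) x : _ →ₗ[ℝ] _)) • lam t x
      = (adjoint (fderiv ℝ (ψ t) x)).inverse
          (deriv (fun s => w s x) t + fderiv ℝ (w t) x (v t x)
            + adjoint (fderiv ℝ (v t) x) (w t x)
            + (LinearMap.trace ℝ (EuclideanSpace ℝ (Fin n))
                (fderiv ℝ (v t) x : _ →ₗ[ℝ] _)) • w t x) := by
  intro t x
  rw [slice_sum hlam t x (v t x), slice_sum hw t x (v t x)]
  rw [hrel_deriv hψ hv hlam hw htransport hrel t x]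
  have h1 : adjoint (fderiv ℝ (ψ t) x) (fderiv ℝ (Jt lam) (t, x) (1, v t x))
      - adjoint (fderiv ℝ (v t) x) (w t x)
      + adjoint (fderiv ℝ (v t) x) (w t x)
      + (LinearMap.trace ℝ (EuclideanSpace ℝ (Fin n))
          (fderiv ℝ (v t) x : _ →ₗ[ℝ] _)) • w t x
      = adjoint (fderiv ℝ (ψ t) x)
          (fderiv ℝ (Jt lam) (t, x) (1, v t x)
            + (LinearMap.trace ℝ (EuclideanSpace ℝ (Fin n))
                (fderiv ℝ (v t) x : _ →ₗ[ℝ] _)) • lam t x) := by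
    rw [map_add, map_smul, hrel t x]
    abel
  rw [h1, inverse_apply_self (isUnit_adjoint (hinvertible t x))]
end

section
/- Let w = ρ(∇μ - v), where ρ satisfies the continuity equation ∂_t ρ + div(ρv) = 0 and μ satisfies ∂_t μ + ∇μ·v = ½|v|². Then ∂_t w + (Dw)v + (∇v)w + w div(v) = -ρ[∂_t v + (Dv)v]. -/
open ContinuousLinearMap

section Aux

set_option linter.unusedSectionVars false

open InnerProductSpace

variable {E G : Type*} [NormedAddCommGroup E] [InnerProductSpace ℝ E] [CompleteSpace E]
  [NormedAddCommGroup G] [NormedSpace ℝ G]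

lemma slice_hasFDerivAt {J : ℝ × E → G} (hJ : ContDiff ℝ (⊤ : ℕ∞) J) (t : ℝ) (x : E) :
    HasFDerivAt (fun y => J (t, y)) ((fderiv ℝ J (t, x)).comp (inr ℝ ℝ E)) x := by
  have h1 : HasFDerivAt (fun y : E => ((t, y) : ℝ × E)) (inr ℝ ℝ E) x :=
    (hasFDerivAt_const t x).prodMk (hasFDerivAt_id x)
  exact ((hJ.differentiable (by simp) (t, x)).hasFDerivAt).comp x h1

lemma slice_hasDerivAt {J : ℝ × E → G} (hJ : ContDiff ℝ (⊤ : ℕ∞) J) (t : ℝ) (x : E) :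
    HasDerivAt (fun s => J (s, x)) (fderiv ℝ J (t, x) (1, 0)) t := by
  have h1 : HasFDerivAt (fun s : ℝ => ((s, x) : ℝ × E)) ((ContinuousLinearMap.id ℝ ℝ).prod 0) t :=
    (hasFDerivAt_id t).prodMk (hasFDerivAt_const x t)
  have h := ((hJ.differentiable (by simp) (t, x)).hasFDerivAt).comp t h1
  simpa [Function.comp_def] using h.hasDerivAt

lemma fderiv_contDiff {J : ℝ × E → G} (hJ : ContDiff ℝ (⊤ : ℕ∞) J) :
    ContDiff ℝ (⊤ : ℕ∞) (fun p => fderiv ℝ J p) :=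
  hJ.fderiv_right (le_refl _)

lemma fderiv_apply_contDiff {J : ℝ × E → G} (hJ : ContDiff ℝ (⊤ : ℕ∞) J) (z : ℝ × E) :
    ContDiff ℝ (⊤ : ℕ∞) (fun p => fderiv ℝ J p z) :=
  (fderiv_contDiff hJ).clm_apply contDiff_const

lemma mixed_partials {J : ℝ × E → G} (hJ : ContDiff ℝ (⊤ : ℕ∞) J) (t : ℝ) (x : E) (u : E) :
    deriv (fun s => fderiv ℝ J (s, x) (0, u)) t
      = fderiv ℝ (fun y => fderiv ℝ J (t, y) (1, 0)) x u := by
  have hJ' := fderiv_contDiff hJ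
  have hdiff : ∀ p : ℝ × E, DifferentiableAt ℝ (fun p => fderiv ℝ J p) p :=
    fun p => (hJ'.differentiable (by simp) p)
  have hsym := second_derivative_symmetric
    (f := J) (f' := fderiv ℝ J) (f'' := fderiv ℝ (fderiv ℝ J) (t, x))
    (fun y => (hJ.differentiable (by simp) y).hasFDerivAt)
    ((hdiff (t, x)).hasFDerivAt) (1, 0) (0, u)
  have h1 := (slice_hasDerivAt (fderiv_apply_contDiff hJ (0, u)) t x).deriv
  have h2 := (slice_hasFDerivAt (fderiv_apply_contDiff hJ (1, 0)) t x)
  rw [h1, h2.fderiv]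
  have e1 : fderiv ℝ (fun p => fderiv ℝ J p (0, u)) (t, x)
      = (fderiv ℝ (fderiv ℝ J) (t, x)).flip (0, u) := by
    rw [fderiv_clm_apply (hdiff (t, x)) (differentiableAt_const _)]
    simp
  have e2 : fderiv ℝ (fun p => fderiv ℝ J p (1, 0)) (t, x)
      = (fderiv ℝ (fderiv ℝ J) (t, x)).flip (1, 0) := by
    rw [fderiv_clm_apply (hdiff (t, x)) (differentiableAt_const _)]
    simp
  rw [e1, e2]
  simpa using hsym

lemma inner_gradient_eq {f : E → ℝ} {x u : E} :
    inner (𝕜 := ℝ) (gradient f x) u = fderiv ℝ f x u :=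
  toDual_symm_apply

lemma gradient_joint_contDiff {J : ℝ × E → ℝ} (hJ : ContDiff ℝ (⊤ : ℕ∞) J) :
    ContDiff ℝ (⊤ : ℕ∞) (fun p : ℝ × E => gradient (fun y => J (p.1, y)) p.2) := by
  have heq : (fun p : ℝ × E => gradient (fun y => J (p.1, y)) p.2)
      = fun p => (toDual ℝ E).symm ((fderiv ℝ J p).comp (inr ℝ ℝ E)) := by
    funext p
    rw [gradient, (slice_hasFDerivAt hJ p.1 p.2).fderiv]
  rw [heq]
  exact (toDual ℝ E).symm.toContinuousLinearEquiv.contDiff.comp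
    ((fderiv_contDiff hJ).clm_comp contDiff_const)

lemma gradient_slice_eq {J : ℝ × E → ℝ} (hJ : ContDiff ℝ (⊤ : ℕ∞) J) (t : ℝ) (x : E) (u : E) :
    inner (𝕜 := ℝ) (gradient (fun y => J (t, y)) x) u = fderiv ℝ J (t, x) (0, u) := by
  rw [inner_gradient_eq, (slice_hasFDerivAt hJ t x).fderiv]
  simp

lemma hessian_symm {f : E → ℝ} (hf : ContDiff ℝ (⊤ : ℕ∞) f) (x : E) (a b : E) :
    inner (𝕜 := ℝ) (fderiv ℝ (gradient f) x a) b
      = inner (𝕜 := ℝ) (fderiv ℝ (gradient f) x b) a := by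
  have hdf : ∀ y, DifferentiableAt ℝ f y := fun y => hf.differentiable (by simp) y
  have hgrad : ContDiff ℝ (⊤ : ℕ∞) (gradient f) := by
    have : gradient f = fun y => (toDual ℝ E).symm (fderiv ℝ f y) := rfl
    rw [this]
    exact (toDual ℝ E).symm.toContinuousLinearEquiv.contDiff.comp (hf.fderiv_right (le_refl _))
  have key : ∀ c : E, inner (𝕜 := ℝ) (fderiv ℝ (gradient f) x c) =
      fun d => fderiv ℝ (fderiv ℝ f) x c d := by
    intro c
    funext d
    have h1 : (fun y => inner (𝕜 := ℝ) (gradient f y) d) = fun y => fderiv ℝ f y d := by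
      funext y; exact inner_gradient_eq
    have h2 : HasFDerivAt (fun y => inner (𝕜 := ℝ) (gradient f y) d)
        ((innerSL ℝ d).comp (fderiv ℝ (gradient f) x)) x := by
      have hfun : (fun y => inner (𝕜 := ℝ) (gradient f y) d)
          = fun y => (innerSL ℝ d) (gradient f y) := by
        funext y; simp [real_inner_comm]
      rw [hfun]
      exact (innerSL ℝ d).hasFDerivAt.comp x
        ((hgrad.differentiable (by simp) x).hasFDerivAt)
    have hd : DifferentiableAt ℝ (fderiv ℝ f) x :=
      (hf.fderiv_right (m := (⊤ : ℕ∞)) (le_refl _)).differentiable (by simp) x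
    have h3 : HasFDerivAt (fun y => fderiv ℝ f y d)
        ((fderiv ℝ (fderiv ℝ f) x).flip d) x := by
      have h := hd.hasFDerivAt.clm_apply (hasFDerivAt_const d x)
      have : (fderiv ℝ (fderiv ℝ f) x).flip d
          = ((fderiv ℝ f x).comp (0 : E →L[ℝ] E) + (fderiv ℝ (fderiv ℝ f) x).flip d) := by
        ext c'; simp
      rw [this]
      exact h
    rw [h1] at h2
    have := h2.unique h3
    calc inner (𝕜 := ℝ) (fderiv ℝ (gradient f) x c) d
        = ((innerSL ℝ d).comp (fderiv ℝ (gradient f) x)) c := by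
          simp [real_inner_comm]
      _ = ((fderiv ℝ (fderiv ℝ f) x).flip d) c := by rw [this]
      _ = fderiv ℝ (fderiv ℝ f) x c d := rfl
  rw [key a, key b]
  exact second_derivative_symmetric (fun y => (hdf y).hasFDerivAt)
    (((hf.fderiv_right (m := (⊤ : ℕ∞)) (le_refl _)).differentiable (by simp) x).hasFDerivAt) a b

lemma trace_eq_sum_proj {n : ℕ} (T : EuclideanSpace ℝ (Fin n) →L[ℝ] EuclideanSpace ℝ (Fin n)) :
    LinearMap.trace ℝ (EuclideanSpace ℝ (Fin n)) (T : _ →ₗ[ℝ] _)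
      = ∑ i : Fin n, T (EuclideanSpace.single i 1) i := by
  classical
  rw [LinearMap.trace_eq_matrix_trace ℝ (EuclideanSpace.basisFun (Fin n) ℝ).toBasis]
  rw [Matrix.trace]
  refine Finset.sum_congr rfl fun i _ => ?_
  simp [Matrix.diag, LinearMap.toMatrix_apply, EuclideanSpace.basisFun_apply]

lemma time_deriv_gradient (v : ℝ → E → E) (μ : ℝ → E → ℝ)
    (hv : ContDiff ℝ (⊤ : ℕ∞) (fun p : ℝ × E => v p.1 p.2))
    (hμ : ContDiff ℝ (⊤ : ℕ∞) (fun p : ℝ × E => μ p.1 p.2))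
    (hHJ : ∀ t x, deriv (fun s => μ s x) t
      + inner (𝕜 := ℝ) (gradient (μ t) x) (v t x) = (1/2) * ‖v t x‖^2)
    (t : ℝ) (x : E) :
    deriv (fun s => gradient (μ s) x) t
      = adjoint (fderiv ℝ (v t) x) (v t x)
        - fderiv ℝ (gradient (μ t)) x (v t x)
        - adjoint (fderiv ℝ (v t) x) (gradient (μ t) x) := by
  have hvt : ∀ y, DifferentiableAt ℝ (v t) y := fun y =>
    (slice_hasFDerivAt hv t y).differentiableAt
  have hμtC : ContDiff ℝ (⊤ : ℕ∞) (μ t) := hμ.comp (contDiff_const.prodMk contDiff_id)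
  have hA : HasFDerivAt (v t) (fderiv ℝ (v t) x) x := (hvt x).hasFDerivAt
  have hGj : ContDiff ℝ (⊤ : ℕ∞) (fun p : ℝ × E => gradient (μ p.1) p.2) :=
    gradient_joint_contDiff hμ
  have hGt : ∀ y, DifferentiableAt ℝ (gradient (μ t)) y := fun y =>
    (slice_hasFDerivAt hGj t y).differentiableAt
  have hH : HasFDerivAt (gradient (μ t)) (fderiv ℝ (gradient (μ t)) x) x := (hGt x).hasFDerivAt
  apply ext_inner_right ℝ
  intro u
  have hGd : HasDerivAt (fun s => gradient (μ s) x)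
      (deriv (fun s => gradient (μ s) x) t) t :=
    (slice_hasDerivAt hGj t x).differentiableAt.hasDerivAt
  have hinner : HasDerivAt (fun s => inner (𝕜 := ℝ) (gradient (μ s) x) u)
      (inner (𝕜 := ℝ) (deriv (fun s => gradient (μ s) x) t) u) t := by
    have h := (innerSL ℝ u).hasFDerivAt.comp_hasDerivAt t hGd
    have heq : ((innerSL ℝ u) ∘ (fun s => gradient (μ s) x))
        = fun s => inner (𝕜 := ℝ) (gradient (μ s) x) u := by
      funext s; simp [Function.comp, real_inner_comm]
    rw [heq] at h
    simpa [real_inner_comm] using h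
  rw [← hinner.deriv]
  have lhs2 : (fun s => inner (𝕜 := ℝ) (gradient (μ s) x) u)
      = fun s => fderiv ℝ (fun p : ℝ × E => μ p.1 p.2) (s, x) (0, u) := by
    funext s; exact gradient_slice_eq hμ s x u
  rw [lhs2, mixed_partials hμ t x u]
  have keyt : ∀ y : E, fderiv ℝ (fun p : ℝ × E => μ p.1 p.2) (t, y) (1, 0)
      = (1/2) * inner (𝕜 := ℝ) (v t y) (v t y)
        - inner (𝕜 := ℝ) (gradient (μ t) y) (v t y) := by
    intro y
    have h1 := (slice_hasDerivAt hμ t y).deriv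
    have h2 := hHJ t y
    rw [h1] at h2
    rw [real_inner_self_eq_norm_sq]
    linarith
  have hfun : (fun y => fderiv ℝ (fun p : ℝ × E => μ p.1 p.2) (t, y) (1, 0))
      = fun y => (1/2) * inner (𝕜 := ℝ) (v t y) (v t y)
        - inner (𝕜 := ℝ) (gradient (μ t) y) (v t y) := by
    funext y; exact keyt y
  rw [hfun]
  have h1 : HasFDerivAt (fun y => inner (𝕜 := ℝ) (v t y) (v t y))
      ((fderivInnerCLM ℝ (v t x, v t x)).comp ((fderiv ℝ (v t) x).prod (fderiv ℝ (v t) x))) x :=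
    hA.inner ℝ hA
  have h2 : HasFDerivAt (fun y => inner (𝕜 := ℝ) (gradient (μ t) y) (v t y))
      ((fderivInnerCLM ℝ (gradient (μ t) x, v t x)).comp
        ((fderiv ℝ (gradient (μ t)) x).prod (fderiv ℝ (v t) x))) x :=
    hH.inner ℝ hA
  have hφ := (HasFDerivAt.fderiv (f := fun y => 1 / 2 * inner (𝕜 := ℝ) (v t y) (v t y)
      - inner (𝕜 := ℝ) (gradient (μ t) y) (v t y)) ((h1.const_mul (1/2 : ℝ)).sub h2))
  rw [hφ]
  have hsym := hessian_symm hμtC x u (v t x)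
  simp only [ContinuousLinearMap.sub_apply, ContinuousLinearMap.smul_apply,
    ContinuousLinearMap.comp_apply, ContinuousLinearMap.prod_apply, fderivInnerCLM_apply,
    inner_sub_left, adjoint_inner_left, smul_eq_mul]
  rw [hsym, real_inner_comm ((fderiv ℝ (v t) x) u) (v t x)]
  ring

lemma w_time (v w : ℝ → E → E) (ρ μ : ℝ → E → ℝ)
    (hv : ContDiff ℝ (⊤ : ℕ∞) (fun p : ℝ × E => v p.1 p.2))
    (hρ : ContDiff ℝ (⊤ : ℕ∞) (fun p : ℝ × E => ρ p.1 p.2))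
    (hμ : ContDiff ℝ (⊤ : ℕ∞) (fun p : ℝ × E => μ p.1 p.2))
    (hw : ∀ t x, w t x = ρ t x • (gradient (μ t) x - v t x)) (t : ℝ) (x : E) :
    deriv (fun s => w s x) t
      = ρ t x • (deriv (fun s => gradient (μ s) x) t - deriv (fun s => v s x) t)
        + deriv (fun s => ρ s x) t • (gradient (μ t) x - v t x) := by
  have hρd : HasDerivAt (fun s => ρ s x) (deriv (fun s => ρ s x) t) t :=
    (slice_hasDerivAt hρ t x).differentiableAt.hasDerivAt
  have hvd : HasDerivAt (fun s => v s x) (deriv (fun s => v s x) t) t :=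
    (slice_hasDerivAt hv t x).differentiableAt.hasDerivAt
  have hGd : HasDerivAt (fun s => gradient (μ s) x) (deriv (fun s => gradient (μ s) x) t) t :=
    (slice_hasDerivAt (gradient_joint_contDiff hμ) t x).differentiableAt.hasDerivAt
  have hwf : (fun s => w s x) = fun s => ρ s x • (gradient (μ s) x - v s x) :=
    funext fun s => hw s x
  rw [hwf]
  exact (hρd.smul (hGd.sub hvd)).deriv

lemma w_space (v w : ℝ → E → E) (ρ μ : ℝ → E → ℝ)
    (hv : ContDiff ℝ (⊤ : ℕ∞) (fun p : ℝ × E => v p.1 p.2))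
    (hρ : ContDiff ℝ (⊤ : ℕ∞) (fun p : ℝ × E => ρ p.1 p.2))
    (hμ : ContDiff ℝ (⊤ : ℕ∞) (fun p : ℝ × E => μ p.1 p.2))
    (hw : ∀ t x, w t x = ρ t x • (gradient (μ t) x - v t x)) (t : ℝ) (x : E) :
    fderiv ℝ (w t) x (v t x)
      = ρ t x • (fderiv ℝ (gradient (μ t)) x (v t x) - fderiv ℝ (v t) x (v t x))
        + (fderiv ℝ (ρ t) x (v t x)) • (gradient (μ t) x - v t x) := by
  have hA : HasFDerivAt (v t) (fderiv ℝ (v t) x) x :=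
    (slice_hasFDerivAt hv t x).differentiableAt.hasFDerivAt
  have hdρ : HasFDerivAt (ρ t) (fderiv ℝ (ρ t) x) x :=
    (slice_hasFDerivAt hρ t x).differentiableAt.hasFDerivAt
  have hH : HasFDerivAt (gradient (μ t)) (fderiv ℝ (gradient (μ t)) x) x :=
    (slice_hasFDerivAt (gradient_joint_contDiff hμ) t x).differentiableAt.hasFDerivAt
  have hwf : w t = fun y => ρ t y • (gradient (μ t) y - v t y) := funext (hw t)
  have hWd := (HasFDerivAt.fderiv (f := fun y => ρ t y • (gradient (μ t) y - v t y))
    (hdρ.smul (hH.sub hA)))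
  rw [hwf, hWd]
  simp

lemma cont_sum {n : ℕ} (v : ℝ → EuclideanSpace ℝ (Fin n) → EuclideanSpace ℝ (Fin n))
    (ρ : ℝ → EuclideanSpace ℝ (Fin n) → ℝ)
    (hv : ContDiff ℝ (⊤ : ℕ∞) (fun p : ℝ × EuclideanSpace ℝ (Fin n) => v p.1 p.2))
    (hρ : ContDiff ℝ (⊤ : ℕ∞) (fun p : ℝ × EuclideanSpace ℝ (Fin n) => ρ p.1 p.2))
    (t : ℝ) (x : EuclideanSpace ℝ (Fin n)) :
    ∑ i : Fin n, fderiv ℝ (fun y => ρ t y * v t y i) x (EuclideanSpace.single i 1)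
      = fderiv ℝ (ρ t) x (v t x)
        + ρ t x * ∑ i : Fin n, fderiv ℝ (v t) x (EuclideanSpace.single i 1) i := by
  have hA : HasFDerivAt (v t) (fderiv ℝ (v t) x) x :=
    (slice_hasFDerivAt hv t x).differentiableAt.hasFDerivAt
  have hρx : DifferentiableAt ℝ (ρ t) x :=
    (slice_hasFDerivAt hρ t x).differentiableAt
  have hterm : ∀ i : Fin n,
      fderiv ℝ (fun y => ρ t y * v t y i) x (EuclideanSpace.single i 1)
        = v t x i * fderiv ℝ (ρ t) x (EuclideanSpace.single i 1)
          + ρ t x * (fderiv ℝ (v t) x (EuclideanSpace.single i 1) i) := by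
    intro i
    have hvi : HasFDerivAt (fun y => v t y i)
        ((EuclideanSpace.proj (𝕜 := ℝ) i).comp (fderiv ℝ (v t) x)) x :=
      (EuclideanSpace.proj (𝕜 := ℝ) i).hasFDerivAt.comp x hA
    rw [fderiv_fun_mul hρx hvi.differentiableAt, hvi.fderiv]
    simp only [ContinuousLinearMap.add_apply, ContinuousLinearMap.smul_apply,
      ContinuousLinearMap.comp_apply, PiLp.proj_apply, smul_eq_mul]
    ring
  rw [Finset.sum_congr rfl fun i _ => hterm i, Finset.sum_add_distrib, ← Finset.mul_sum]
  congr 1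
  have hVsum : ∑ i : Fin n, v t x i • EuclideanSpace.single i (1 : ℝ) = v t x := by
    have := (EuclideanSpace.basisFun (Fin n) ℝ).sum_repr (v t x)
    simpa [EuclideanSpace.basisFun_apply] using this
  calc ∑ i : Fin n, v t x i * fderiv ℝ (ρ t) x (EuclideanSpace.single i 1)
      = fderiv ℝ (ρ t) x (∑ i : Fin n, v t x i • EuclideanSpace.single i 1) := by
        rw [map_sum]
        refine Finset.sum_congr rfl fun i _ => ?_
        rw [map_smul]; simp
    _ = fderiv ℝ (ρ t) x (v t x) := by rw [hVsum]

end Aux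

/-- If `w = ρ(∇μ - v)`, with `ρ` solving the continuity equation and `μ`
solving `∂ₜμ + ∇μ·v = ½|v|²`, then
`∂ₜw + (Dw)v + (∇v)w + w div v = -ρ[∂ₜv + (Dv)v]`. -/
theorem w_evolution {n : ℕ}
    (v w : ℝ → EuclideanSpace ℝ (Fin n) → EuclideanSpace ℝ (Fin n))
    (ρ μ : ℝ → EuclideanSpace ℝ (Fin n) → ℝ)
    (hv : ContDiff ℝ (⊤ : ℕ∞) (fun p : ℝ × EuclideanSpace ℝ (Fin n) => v p.1 p.2))
    (hρ : ContDiff ℝ (⊤ : ℕ∞) (fun p : ℝ × EuclideanSpace ℝ (Fin n) => ρ p.1 p.2))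
    (hμ : ContDiff ℝ (⊤ : ℕ∞) (fun p : ℝ × EuclideanSpace ℝ (Fin n) => μ p.1 p.2))
    (hw : ∀ t x, w t x = ρ t x • (gradient (μ t) x - v t x))
    (hcont : ∀ t x, deriv (fun s => ρ s x) t
      + ∑ i : Fin n, fderiv ℝ (fun y => ρ t y * v t y i) x
          (EuclideanSpace.single i 1) = 0)
    (hHJ : ∀ t x, deriv (fun s => μ s x) t
      + inner (𝕜 := ℝ) (gradient (μ t) x) (v t x) = (1/2) * ‖v t x‖^2) :
    ∀ t x,
      deriv (fun s => w s x) t + fderiv ℝ (w t) x (v t x)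
        + adjoint (fderiv ℝ (v t) x) (w t x)
        + (LinearMap.trace ℝ (EuclideanSpace ℝ (Fin n))
            (fderiv ℝ (v t) x : _ →ₗ[ℝ] _)) • w t x
      = -(ρ t x) • (deriv (fun s => v s x) t + fderiv ℝ (v t) x (v t x)) := by
  intro t x
  have hAd : adjoint (fderiv ℝ (v t) x) (w t x)
      = ρ t x • (adjoint (fderiv ℝ (v t) x) (gradient (μ t) x)
          - adjoint (fderiv ℝ (v t) x) (v t x)) := by
    rw [hw t x, map_smul, map_sub]
  have hscal : deriv (fun s => ρ s x) t
      = -(fderiv ℝ (ρ t) x (v t x))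
        - ρ t x * ∑ i : Fin n, fderiv ℝ (v t) x (EuclideanSpace.single i 1) i := by
    have h := hcont t x
    rw [cont_sum v ρ hv hρ t x] at h
    linarith
  rw [w_time v w ρ μ hv hρ hμ hw t x, w_space v w ρ μ hv hρ hμ hw t x, hAd,
    trace_eq_sum_proj (fderiv ℝ (v t) x), hw t x,
    time_deriv_gradient v μ hv hμ hHJ t x, hscal]
  module
end

section
/- Let w = ρ(∇μ - a v), where a : [0,∞) → ℝ is smooth, ρ satisfies ∂_t ρ + div(ρv) = 0, and μ satisfies ∂_t μ + ∇μ·v = ½ a|v|². Then ∂_t w + (Dw)v + (∇v)w + w div(v) = -ρ[∂_t(av) + a(Dv)v]. -/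
open ContinuousLinearMap

section helpers

variable {E G : Type*} [NormedAddCommGroup E] [NormedSpace ℝ E]
  [NormedAddCommGroup G] [NormedSpace ℝ G]

lemma wd_slice_contDiff {f : ℝ → E → G}
    (hf : ContDiff ℝ (⊤ : ℕ∞) (fun p : ℝ × E => f p.1 p.2)) (t : ℝ) :
    ContDiff ℝ (⊤ : ℕ∞) (f t) :=
  hf.comp (ContDiff.prodMk (contDiff_const (c := t)) contDiff_id)

lemma wd_partial_t {f : ℝ → E → G}
    (hf : ContDiff ℝ (⊤ : ℕ∞) (fun p : ℝ × E => f p.1 p.2)) (t : ℝ) (x : E) :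
    HasDerivAt (fun s => f s x)
      (fderiv ℝ (fun p : ℝ × E => f p.1 p.2) (t, x) (1, 0)) t := by
  have h2 : HasFDerivAt (fun p : ℝ × E => f p.1 p.2)
      (fderiv ℝ (fun p : ℝ × E => f p.1 p.2) (t, x)) (t, x) :=
    (hf.differentiable (by simp) (t, x)).hasFDerivAt
  have h1 : HasDerivAt (fun s : ℝ => (s, x)) ((1 : ℝ), (0 : E)) t := by
    simpa using (hasFDerivAt_prodMk_left t x).hasDerivAt
  exact h2.comp_hasDerivAt t h1

lemma wd_partial_x {f : ℝ → E → G}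
    (hf : ContDiff ℝ (⊤ : ℕ∞) (fun p : ℝ × E => f p.1 p.2)) (t : ℝ) (x : E) :
    HasFDerivAt (f t)
      ((fderiv ℝ (fun p : ℝ × E => f p.1 p.2) (t, x)).comp (inr ℝ ℝ E)) x :=
  ((hf.differentiable (by simp) (t, x)).hasFDerivAt).comp x (hasFDerivAt_prodMk_right t x)

end helpers

section grad

variable {E : Type*} [NormedAddCommGroup E] [InnerProductSpace ℝ E] [CompleteSpace E]

noncomputable def gradCLM : (E →L[ℝ] ℝ) →L[ℝ] E :=
  LinearMap.mkContinuous
    { toFun := fun L => (InnerProductSpace.toDual ℝ E).symm L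
      map_add' := by intros; simp
      map_smul' := by intros; simp }
    1 (by intro L; simp)

lemma gradCLM_inner (L : E →L[ℝ] ℝ) (z : E) :
    inner (𝕜 := ℝ) (gradCLM L) z = L z :=
  InnerProductSpace.toDual_symm_apply

lemma gradient_eq_gradCLM (f : E → ℝ) (y : E) :
    gradient f y = gradCLM (fderiv ℝ f y) := rfl

end grad

lemma wd_trace_clm_eq {n : ℕ} (L : EuclideanSpace ℝ (Fin n) →L[ℝ] EuclideanSpace ℝ (Fin n)) :
    LinearMap.trace ℝ (EuclideanSpace ℝ (Fin n)) (L : _ →ₗ[ℝ] _)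
      = ∑ i, L (EuclideanSpace.single i 1) i := by
  rw [LinearMap.trace_eq_matrix_trace ℝ ((EuclideanSpace.basisFun (Fin n) ℝ).toBasis)]
  simp [Matrix.trace, LinearMap.toMatrix_apply, Matrix.diag]

set_option maxHeartbeats 2000000 in
/-- Dissipative version: if `w = ρ(∇μ - a v)` with `ρ` solving the continuity
equation and `μ` solving `∂ₜμ + ∇μ·v = ½ a|v|²`, then
`∂ₜw + (Dw)v + (∇v)w + w div v = -ρ[∂ₜ(av) + a(Dv)v]`. -/
theorem w_evolution_dissipative {n : ℕ}
    (v w : ℝ → EuclideanSpace ℝ (Fin n) → EuclideanSpace ℝ (Fin n))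
    (ρ μ : ℝ → EuclideanSpace ℝ (Fin n) → ℝ) (a : ℝ → ℝ)
    (hv : ContDiff ℝ (⊤ : ℕ∞) (fun p : ℝ × EuclideanSpace ℝ (Fin n) => v p.1 p.2))
    (hρ : ContDiff ℝ (⊤ : ℕ∞) (fun p : ℝ × EuclideanSpace ℝ (Fin n) => ρ p.1 p.2))
    (hμ : ContDiff ℝ (⊤ : ℕ∞) (fun p : ℝ × EuclideanSpace ℝ (Fin n) => μ p.1 p.2))
    (ha : ContDiff ℝ (⊤ : ℕ∞) a)
    (hw : ∀ t x, w t x = ρ t x • (gradient (μ t) x - a t • v t x))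
    (hcont : ∀ t x, deriv (fun s => ρ s x) t
      + ∑ i : Fin n, fderiv ℝ (fun y => ρ t y * v t y i) x
          (EuclideanSpace.single i 1) = 0)
    (hHJ : ∀ t x, deriv (fun s => μ s x) t
      + inner (𝕜 := ℝ) (gradient (μ t) x) (v t x) = (1/2) * a t * ‖v t x‖^2) :
    ∀ t x,
      deriv (fun s => w s x) t + fderiv ℝ (w t) x (v t x)
        + adjoint (fderiv ℝ (v t) x) (w t x)
        + (LinearMap.trace ℝ (EuclideanSpace ℝ (Fin n))
            (fderiv ℝ (v t) x : _ →ₗ[ℝ] _)) • w t x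
      = -(ρ t x) • (deriv (fun s => a s • v s x) t
          + a t • fderiv ℝ (v t) x (v t x)) := by
  intro t x
  have hvx : ContDiff ℝ (⊤ : ℕ∞) (v t) := wd_slice_contDiff hv t
  have hρx : ContDiff ℝ (⊤ : ℕ∞) (ρ t) := wd_slice_contDiff hρ t
  have hμx : ∀ s, ContDiff ℝ (⊤ : ℕ∞) (μ s) := fun s => wd_slice_contDiff hμ s
  set Vt := v t x with hVt
  set R := ρ t x with hR
  set A := a t with hA
  set Dv := fderiv ℝ (v t) x with hDv
  set Dρ := fderiv ℝ (ρ t) x with hDρ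
  set Dμ := fderiv ℝ (μ t) x with hDμ
  set D2μ := fderiv ℝ (fderiv ℝ (μ t)) x with hD2μ
  have hDFμ : ContDiff ℝ (⊤ : ℕ∞) (fderiv ℝ (fun p : ℝ × EuclideanSpace ℝ (Fin n) => μ p.1 p.2)) :=
    hμ.fderiv_right (by simp)
  set DFμ := fderiv ℝ (fun p : ℝ × EuclideanSpace ℝ (Fin n) => μ p.1 p.2) with hDFμdef
  set D2 := fderiv ℝ DFμ (t, x) with hD2def
  -- time derivatives of the basic fields
  have hvt := wd_partial_t hv t x
  set vT := fderiv ℝ (fun p : ℝ × EuclideanSpace ℝ (Fin n) => v p.1 p.2) (t, x) (1, 0) with hvT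
  have hρt := wd_partial_t hρ t x
  set ρT := fderiv ℝ (fun p : ℝ × EuclideanSpace ℝ (Fin n) => ρ p.1 p.2) (t, x) (1, 0) with hρT
  have hat : HasDerivAt a (deriv a t) t := (ha.differentiable (by simp) t).hasDerivAt
  set a' := deriv a t with ha'
  -- fderiv of μ-slices via the joint derivative
  have hfd_eq : ∀ (s : ℝ) (y : EuclideanSpace ℝ (Fin n)),
      fderiv ℝ (μ s) y = (DFμ (s, y)).comp (inr ℝ ℝ _) :=
    fun s y => (wd_partial_x hμ s y).fderiv
  -- time derivative of the gradient of μ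
  set Φ : (ℝ × EuclideanSpace ℝ (Fin n) →L[ℝ] ℝ) →L[ℝ] (EuclideanSpace ℝ (Fin n) →L[ℝ] ℝ) :=
    (compL ℝ (EuclideanSpace ℝ (Fin n)) (ℝ × EuclideanSpace ℝ (Fin n)) ℝ).flip
      (inr ℝ ℝ _) with hΦ
  have hΦapp : ∀ L, Φ L = L.comp (inr ℝ ℝ _) := fun _ => rfl
  have hLt : HasDerivAt (fun s => DFμ (s, x)) (D2 (1, 0)) t := wd_partial_t
    (f := fun s y => DFμ (s, y)) hDFμ t x
  have hGt : HasDerivAt (fun s => gradient (μ s) x) (gradCLM (Φ (D2 (1, 0)))) t := by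
    have h1 : HasDerivAt (fun s => gradCLM (Φ (DFμ (s, x)))) (gradCLM (Φ (D2 (1, 0)))) t :=
      (gradCLM.hasFDerivAt).comp_hasDerivAt t ((Φ.hasFDerivAt).comp_hasDerivAt t hLt)
    have h2 : (fun s => gradient (μ s) x) = (fun s => gradCLM (Φ (DFμ (s, x)))) := by
      funext s
      rw [gradient_eq_gradCLM, hfd_eq s x, hΦapp]
    rw [h2]; exact h1
  set Gt := gradCLM (Φ (D2 (1, 0))) with hGtdef
  -- symmetry of second derivatives
  have hsymm : ∀ p q, D2 p q = D2 q p := fun p q =>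
    (hμ.contDiffAt.isSymmSndFDerivAt (by simp; exact WithTop.coe_le_coe.mpr le_top)) p q
  have hsymμ : ∀ p q, D2μ p q = D2μ q p := fun p q =>
    ((hμx t).contDiffAt.isSymmSndFDerivAt (by simp; exact WithTop.coe_le_coe.mpr le_top)) p q
  -- Term 1 : time derivative of w
  have e1 : (fun s => w s x) = (fun s => ρ s x • (gradient (μ s) x - a s • v s x)) :=
    funext fun s => hw s x
  have hW : HasDerivAt (fun s => w s x)
      (R • (Gt - (A • vT + a' • Vt)) + ρT • (gradient (μ t) x - A • Vt)) t := by
    rw [e1]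
    exact hρt.smul (hGt.sub (hat.smul hvt))
  -- Term 2 : spatial derivative of w t
  have hρFx : HasFDerivAt (ρ t) Dρ x := (hρx.differentiable (by simp) x).hasFDerivAt
  have hvFx : HasFDerivAt (v t) Dv x := (hvx.differentiable (by simp) x).hasFDerivAt
  have hμfd : ContDiff ℝ (⊤ : ℕ∞) (fderiv ℝ (μ t)) := (hμx t).fderiv_right (by simp)
  have hD2μF : HasFDerivAt (fderiv ℝ (μ t)) D2μ x := (hμfd.differentiable (by simp) x).hasFDerivAt
  have hgradF : HasFDerivAt (gradient (μ t)) (gradCLM.comp D2μ) x := by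
    have h1 := (gradCLM.hasFDerivAt).comp x hD2μF
    have h2 : gradient (μ t) = fun y => gradCLM (fderiv ℝ (μ t) y) :=
      funext fun y => gradient_eq_gradCLM _ _
    rw [h2]; exact h1
  have e2 : w t = (fun y => ρ t y • (gradient (μ t) y - a t • v t y)) :=
    funext fun y => hw t y
  have hWx : HasFDerivAt (w t)
      (R • ((gradCLM.comp D2μ) - A • Dv) + (Dρ).smulRight (gradient (μ t) x - A • Vt)) x := by
    rw [e2]
    exact hρFx.smul (hgradF.sub (hvFx.const_smul A))
  -- trace
  set tr := LinearMap.trace ℝ (EuclideanSpace ℝ (Fin n)) (Dv : _ →ₗ[ℝ] _) with htrdef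
  have htr_eq : tr = ∑ i, Dv (EuclideanSpace.single i 1) i := wd_trace_clm_eq Dv
  -- continuity equation in trace form
  have hct : ρT + Dρ Vt + R * tr = 0 := by
    have h0 := hcont t x
    rw [hρt.deriv] at h0
    have h1 : ∀ i : Fin n, fderiv ℝ (fun y => ρ t y * v t y i) x (EuclideanSpace.single i 1)
        = R * (Dv (EuclideanSpace.single i 1) i) + (Vt i) * Dρ (EuclideanSpace.single i 1) := by
      intro i
      have hvi : HasFDerivAt (fun y => v t y i)
          ((EuclideanSpace.proj (𝕜 := ℝ) i).comp Dv) x :=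
        (EuclideanSpace.proj (𝕜 := ℝ) i).hasFDerivAt.comp x hvFx
      rw [HasFDerivAt.fderiv (f := fun y => ρ t y * v t y i) (hρFx.mul hvi)]
      simp [EuclideanSpace.proj]
      rfl
    rw [Finset.sum_congr rfl (fun i _ => h1 i)] at h0
    rw [Finset.sum_add_distrib, ← Finset.mul_sum, ← htr_eq] at h0
    have h2 : ∑ i : Fin n, (Vt i) * Dρ (EuclideanSpace.single i 1) = Dρ Vt := by
      have hx : Vt = ∑ i : Fin n, (Vt i) • EuclideanSpace.single i 1 := by
        have := ((EuclideanSpace.basisFun (Fin n) ℝ).sum_repr Vt).symm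
        simpa [EuclideanSpace.basisFun_apply, EuclideanSpace.basisFun_repr] using this
      conv_rhs => rw [hx]
      rw [map_sum]
      simp [smul_eq_mul]
    rw [h2] at h0
    linarith
  -- HJ identity rewritten
  have hμs_deriv : ∀ y, deriv (fun s => μ s y) t = DFμ (t, y) (1, 0) :=
    fun y => (wd_partial_t hμ t y).deriv
  have hHJ' : (fun y => DFμ (t, y) ((1 : ℝ), (0 : EuclideanSpace ℝ (Fin n))))
      = (fun y => (1/2) * A * inner (𝕜 := ℝ) (v t y) (v t y)
          - fderiv ℝ (μ t) y (v t y)) := by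
    funext y
    have h0 := hHJ t y
    rw [hμs_deriv y] at h0
    have hg : inner (𝕜 := ℝ) (gradient (μ t) y) (v t y) = fderiv ℝ (μ t) y (v t y) := by
      rw [gradient_eq_gradCLM]; exact gradCLM_inner _ _
    rw [hg] at h0
    have hn : inner (𝕜 := ℝ) (v t y) (v t y) = ‖v t y‖^2 := real_inner_self_eq_norm_sq _
    rw [hn]
    linarith
  -- spatial derivative of both sides of HJ
  have hDFx : HasFDerivAt (fun y => DFμ (t, y)) (D2.comp (inr ℝ ℝ _)) x :=
    wd_partial_x (f := fun s y => DFμ (s, y)) hDFμ t x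
  have hL : HasFDerivAt (fun y => DFμ (t, y) ((1 : ℝ), (0 : EuclideanSpace ℝ (Fin n))))
      ((DFμ (t, x)).comp (0 : _ →L[ℝ] _) + (D2.comp (inr ℝ ℝ _)).flip (1, 0)) x :=
    hDFx.clm_apply (hasFDerivAt_const _ x)
  have hNorm : HasFDerivAt (fun y => inner (𝕜 := ℝ) (v t y) (v t y))
      ((fderivInnerCLM ℝ (Vt, Vt)).comp (Dv.prod Dv)) x := hvFx.inner ℝ hvFx
  have hB : HasFDerivAt (fun y => fderiv ℝ (μ t) y (v t y))
      ((Dμ).comp Dv + D2μ.flip Vt) x := hD2μF.clm_apply hvFx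
  have hRd : HasFDerivAt (fun y => (1/2) * A * inner (𝕜 := ℝ) (v t y) (v t y)
      - fderiv ℝ (μ t) y (v t y))
      (((1/2) * A) • ((fderivInnerCLM ℝ (Vt, Vt)).comp (Dv.prod Dv))
        - ((Dμ).comp Dv + D2μ.flip Vt)) x :=
    (hNorm.const_mul ((1/2) * A)).sub hB
  have hders : ((DFμ (t, x)).comp (0 : _ →L[ℝ] _) + (D2.comp (inr ℝ ℝ _)).flip (1, 0))
      = (((1/2) * A) • ((fderivInnerCLM ℝ (Vt, Vt)).comp (Dv.prod Dv))
        - ((Dμ).comp Dv + D2μ.flip Vt)) := by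
    rw [hHJ'] at hL
    exact hL.unique hRd
  -- now pair everything with an arbitrary vector u
  apply ext_inner_right ℝ
  intro u
  have hgx : ∀ z, inner (𝕜 := ℝ) (gradient (μ t) x) z = Dμ z := fun z => by
    rw [gradient_eq_gradCLM]; exact gradCLM_inner _ _
  have hw_u : ∀ z, inner (𝕜 := ℝ) (w t x) z = R * (Dμ z - A * inner (𝕜 := ℝ) Vt z) := by
    intro z
    rw [hw t x]
    rw [real_inner_smul_left, inner_sub_left, real_inner_smul_left, hgx]
  -- the mixed partial identity applied to u
  have hmix : D2 (1, 0) ((0 : ℝ), u)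
      = (1/2) * A * (inner (𝕜 := ℝ) Vt (Dv u) + inner (𝕜 := ℝ) (Dv u) Vt)
        - (Dμ (Dv u) + D2μ u Vt) := by
    have h1 := congrFun (congrArg (fun (L : _ →L[ℝ] ℝ) => (L : _ → ℝ)) hders) u
    simp only [ContinuousLinearMap.add_apply, ContinuousLinearMap.comp_apply,
      ContinuousLinearMap.zero_apply, ContinuousLinearMap.flip_apply,
      ContinuousLinearMap.smul_apply, ContinuousLinearMap.sub_apply,
      ContinuousLinearMap.inr_apply, ContinuousLinearMap.prod_apply,
      fderivInnerCLM_apply, map_zero, zero_add, smul_eq_mul] at h1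
    rw [hsymm (1, 0) (0, u)]
    rw [h1]
  have hsymu : D2μ u Vt = D2μ Vt u := hsymμ u Vt
  have hic : inner (𝕜 := ℝ) (Dv u) Vt = inner (𝕜 := ℝ) Vt (Dv u) := real_inner_comm _ _
  -- Term 1
  have hT1 : inner (𝕜 := ℝ) (deriv (fun s => w s x) t) u
      = R * (D2 (1, 0) ((0 : ℝ), u) - (A * inner (𝕜 := ℝ) vT u + a' * inner (𝕜 := ℝ) Vt u))
        + ρT * (Dμ u - A * inner (𝕜 := ℝ) Vt u) := by
    rw [hW.deriv]
    rw [inner_add_left, real_inner_smul_left, real_inner_smul_left, inner_sub_left,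
      inner_sub_left, inner_add_left, real_inner_smul_left, real_inner_smul_left, hgx,
      real_inner_smul_left]
    have : inner (𝕜 := ℝ) Gt u = D2 (1, 0) ((0 : ℝ), u) := by
      rw [hGtdef, gradCLM_inner, hΦapp]
      simp
    rw [this]
  -- Term 2
  have hT2 : inner (𝕜 := ℝ) (fderiv ℝ (w t) x Vt) u
      = R * (D2μ Vt u - A * inner (𝕜 := ℝ) (Dv Vt) u)
        + Dρ Vt * (Dμ u - A * inner (𝕜 := ℝ) Vt u) := by
    rw [hWx.fderiv]
    simp only [ContinuousLinearMap.add_apply, ContinuousLinearMap.smul_apply,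
      ContinuousLinearMap.sub_apply, ContinuousLinearMap.comp_apply,
      ContinuousLinearMap.smulRight_apply]
    rw [inner_add_left, real_inner_smul_left, inner_sub_left, real_inner_smul_left,
      real_inner_smul_left, inner_sub_left, real_inner_smul_left, hgx, gradCLM_inner]
  -- Term 3
  have hT3 : inner (𝕜 := ℝ)
      ((ContinuousLinearMap.adjoint (fderiv ℝ (v t) x)) (w t x)) u
      = R * (Dμ (Dv u) - A * inner (𝕜 := ℝ) Vt (Dv u)) := by
    rw [ContinuousLinearMap.adjoint_inner_left]
    exact hw_u (Dv u)
  -- Term 4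
  have hT4 : inner (𝕜 := ℝ) (tr • w t x) u = tr * (R * (Dμ u - A * inner (𝕜 := ℝ) Vt u)) := by
    rw [real_inner_smul_left, hw_u u]
  -- RHS
  have hRHS : inner (𝕜 := ℝ) (-R • (deriv (fun s => a s • v s x) t + A • Dv Vt)) u
      = -R * ((A * inner (𝕜 := ℝ) vT u + a' * inner (𝕜 := ℝ) Vt u)
          + A * inner (𝕜 := ℝ) (Dv Vt) u) := by
    rw [HasDerivAt.deriv (f := fun s => a s • v s x) (hat.smul hvt)]
    rw [real_inner_smul_left, inner_add_left, inner_add_left, real_inner_smul_left,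
      real_inner_smul_left, real_inner_smul_left]
  rw [inner_add_left, inner_add_left, inner_add_left, hT1, hT2, hT3, hT4, hRHS]
  linear_combination (Dμ u - A * inner (𝕜 := ℝ) Vt u) * hct + R * hmix - R * hsymu
    + (R * A / 2) * hic
end

section
/- If φ_t solves ∂_t φ = v ∘ φ and v solves a ∂_t v + a(Dv)v + (∂_t a)v = -(b/ρ)∇U(φ), with ρ the density solving the continuity equation with initial density ρ_0, then φ solves the second-order equation a ∂²_t φ + (∂_t a)∂_t φ + (b/ρ_0) ∇̃U(φ) = 0, where ∇̃U(φ) = [∇U(φ) ∘ φ] det(Dφ). -/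
/-- Second-order PDE for the forward mapping: if `∂ₜφ = v∘φ` and `v` solves
the dissipative velocity equation, then
`a ∂ₜ²φ + (∂ₜa)∂ₜφ + (b/ρ₀)∇̃U(φ) = 0` where
`∇̃U(φ) = [∇U(φ)∘φ] det(Dφ)`. -/
theorem second_order_pde_forward_map {n : ℕ}
    (φ v g : ℝ → EuclideanSpace ℝ (Fin n) → EuclideanSpace ℝ (Fin n))
    (ρ : ℝ → EuclideanSpace ℝ (Fin n) → ℝ) (a b : ℝ → ℝ)
    (hφ : ContDiff ℝ (⊤ : ℕ∞) (fun q : ℝ × EuclideanSpace ℝ (Fin n) => φ q.1 q.2))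
    (hv : ContDiff ℝ (⊤ : ℕ∞) (fun q : ℝ × EuclideanSpace ℝ (Fin n) => v q.1 q.2))
    (hg : ContDiff ℝ (⊤ : ℕ∞) (fun q : ℝ × EuclideanSpace ℝ (Fin n) => g q.1 q.2))
    (hρ : ContDiff ℝ (⊤ : ℕ∞) (fun q : ℝ × EuclideanSpace ℝ (Fin n) => ρ q.1 q.2))
    (ha : ContDiff ℝ (⊤ : ℕ∞) a) (hb : ContDiff ℝ (⊤ : ℕ∞) b)
    (hapos : ∀ t, 0 < a t) (hρpos : ∀ t x, 0 < ρ t x)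
    (hbij : ∀ t, Function.Bijective (φ t))
    (hflow : ∀ t x, deriv (fun s => φ s x) t = v t (φ t x))
    (hvel : ∀ t y, a t • deriv (fun s => v s y) t
      + a t • fderiv ℝ (v t) y (v t y) + deriv a t • v t y
      = -(b t / ρ t y) • g t y)
    (hmass : ∀ t x, ρ 0 x = ρ t (φ t x) * (fderiv ℝ (φ t) x).det) :
    ∀ t x,
      a t • deriv (fun s => deriv (fun r => φ r x) s) t
        + deriv a t • deriv (fun s => φ s x) t
        + (b t / ρ 0 x) • ((fderiv ℝ (φ t) x).det • g t (φ t x)) = 0 := by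
  intro t x
  set y := φ t x with hy
  set V : ℝ × EuclideanSpace ℝ (Fin n) → EuclideanSpace ℝ (Fin n) := fun q => v q.1 q.2 with hVdef
  have hVd : Differentiable ℝ V := hv.differentiable (by simp)
  have hΦd : Differentiable ℝ (fun q : ℝ × EuclideanSpace ℝ (Fin n) => φ q.1 q.2) := hφ.differentiable (by simp)
  have hd1 : ∀ s, HasDerivAt (fun r => φ r x) (v s (φ s x)) s := by
    intro s
    have hdiff : DifferentiableAt ℝ (fun r => φ r x) s := by
      have := (hΦd.comp (differentiable_id.prodMk (differentiable_const x))).differentiableAt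
        (x := s)
      exact this
    have h := hdiff.hasDerivAt
    rwa [hflow s x] at h
  set L := fderiv ℝ V (t, y) with hL
  have hVF : HasFDerivAt V L (t, y) := (hVd (t, y)).hasFDerivAt
  have hγ : HasDerivAt (fun s => ((s : ℝ), φ s x)) (1, v t y) t :=
    (hasDerivAt_id t).prodMk (hd1 t)
  have hcomp : HasDerivAt (fun s => v s (φ s x)) (L (1, v t y)) t :=
    by have := HasFDerivAt.comp_hasDerivAt (l := V) t hVF hγ; exact this
  have hpt : HasDerivAt (fun s => v s y) (L (1, 0)) t := by
    have h1 : HasDerivAt (fun s : ℝ => (s, y)) ((1 : ℝ), (0 : EuclideanSpace ℝ (Fin n))) t :=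
      (hasDerivAt_id t).prodMk (hasDerivAt_const t y)
    exact hVF.comp_hasDerivAt t h1
  have hpx : fderiv ℝ (v t) y (v t y) = L (0, v t y) := by
    have h2 : HasFDerivAt (v t) (L.comp (ContinuousLinearMap.inr ℝ ℝ (EuclideanSpace ℝ (Fin n)))) y := by
      have h3 : HasFDerivAt (fun z : EuclideanSpace ℝ (Fin n) => ((t : ℝ), z))
          (ContinuousLinearMap.inr ℝ ℝ (EuclideanSpace ℝ (Fin n))) y := hasFDerivAt_prodMk_right t y
      exact hVF.comp y h3
    rw [h2.fderiv]; rfl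
  have hL1 : L (1, v t y) = L (1, 0) + L (0, v t y) := by
    have he : ((1 : ℝ), v t y) = ((1 : ℝ), (0 : EuclideanSpace ℝ (Fin n))) + ((0 : ℝ), v t y) := by
      simp [Prod.ext_iff]
    rw [he, map_add]
  have e1 : deriv (fun s => deriv (fun r => φ r x) s) t = L (1, v t y) := by
    have hfun : (fun s => deriv (fun r => φ r x) s) = fun s => v s (φ s x) :=
      funext fun s => hflow s x
    rw [hfun]; exact hcomp.deriv
  have hvel' := hvel t y
  rw [hpt.deriv, hpx] at hvel'
  -- determinant identity
  have hρ0 : ρ 0 x ≠ 0 := (hρpos 0 x).ne'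
  have hρt : ρ t y ≠ 0 := (hρpos t y).ne'
  have hsc : (b t / ρ 0 x) • ((fderiv ℝ (φ t) x).det • g t y) = (b t / ρ t y) • g t y := by
    rw [smul_smul]
    congr 1
    have hm := hmass t x
    rw [← hy] at hm
    have hdet : (fderiv ℝ (φ t) x).det = ρ 0 x / ρ t y := by
      field_simp [hm]
      rw [hm]; ring
    rw [hdet]
    field_simp
  rw [e1, hflow t x, ← hy, hL1, hsc, smul_add, hvel']
  simp
end
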